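/- Let A be a Banach algebra, X a Banach A-bimodule, and T, S : A → A continuous linear maps. Suppose that for every x'' ∈ X**, the map a'' ↦ x''T''(a'') from A** to X** is weak-star to weak continuous. If D : A → X* is a T-S-derivation, then D'' : A** → X*** is a T''-S''-derivation (with respect to the first Arens product on A** and the induced A**-bimodule structure on X***). -/

import Mathlib

/-!
Fix `G ∈ A**` and `x'' ∈ X**`. As functions of `F ∈ A**`, the three terms of
`D''(F □ G)(x'') = (T''F · D''G)(x'') + (D''F · S''G)(x'')` are evaluations `F ↦ F f` at elements
`f ∈ A*`: the first and the last by the shape of the Arens extensions, the middle one because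
`F ↦ x'' · T''F` is weak-star to weak continuous and the weak-star continuous functionals on `A**`
are exactly the evaluations at points of `A*`. Two such evaluations agree as soon as they agree
on the canonical image of `A`, where the identity is the `T-S`-derivation identity of `D`.
-/

set_option maxHeartbeats 1000000

open Filter Topology ContinuousLinearMap NormedSpace

noncomputable section DualSetup

/-- `NormedSpace.Dual` of the older Mathlib (since replaced there by the abbreviation
`StrongDual`): the topological dual `E →L[𝕜] 𝕜`, as a type of its own. -/
def NormedSpace.Dual (𝕜 : Type*) [NontriviallyNormedField 𝕜] (E : Type*)
    [SeminormedAddCommGroup E] [NormedSpace 𝕜 E] : Type _ :=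
  E →L[𝕜] 𝕜

instance NormedSpace.Dual.instSeminormedAddCommGroup (𝕜 : Type*) [NontriviallyNormedField 𝕜]
    (E : Type*) [SeminormedAddCommGroup E] [NormedSpace 𝕜 E] :
    SeminormedAddCommGroup (NormedSpace.Dual 𝕜 E) :=
  ContinuousLinearMap.toSeminormedAddCommGroup

instance NormedSpace.Dual.instNormedSpace (𝕜 : Type*) [NontriviallyNormedField 𝕜]
    (E : Type*) [SeminormedAddCommGroup E] [NormedSpace 𝕜 E] :
    NormedSpace 𝕜 (NormedSpace.Dual 𝕜 E) :=
  ContinuousLinearMap.toNormedSpace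

instance NormedSpace.Dual.instFunLike (𝕜 : Type*) [NontriviallyNormedField 𝕜]
    (E : Type*) [SeminormedAddCommGroup E] [NormedSpace 𝕜 E] :
    FunLike (NormedSpace.Dual 𝕜 E) E 𝕜 :=
  ContinuousLinearMap.funLike

instance NormedSpace.Dual.instContinuousLinearMapClass (𝕜 : Type*) [NontriviallyNormedField 𝕜]
    (E : Type*) [SeminormedAddCommGroup E] [NormedSpace 𝕜 E] :
    ContinuousLinearMapClass (NormedSpace.Dual 𝕜 E) 𝕜 E 𝕜 :=
  ContinuousLinearMap.continuousSemilinearMapClass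

/-- `WeakDual.toNormedDual` of the older Mathlib (now `WeakDual.toStrongDual`). -/
def WeakDual.toNormedDual {𝕜 : Type*} [NontriviallyNormedField 𝕜] {E : Type*}
    [SeminormedAddCommGroup E] [NormedSpace 𝕜 E] : WeakDual 𝕜 E ≃ₗ[𝕜] NormedSpace.Dual 𝕜 E :=
  WeakDual.toStrongDual

end DualSetup

noncomputable section ArensSetup

/-- The adjoint (transpose) of a continuous linear map between normed spaces. -/
def adjCLM {E F : Type*} [SeminormedAddCommGroup E] [NormedSpace ℝ E]
    [SeminormedAddCommGroup F] [NormedSpace ℝ F] (T : E →L[ℝ] F) :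
    Dual ℝ F →L[ℝ] Dual ℝ E :=
  (ContinuousLinearMap.compL ℝ E F ℝ).flip T

@[simp] theorem adjCLM_apply {E F : Type*} [SeminormedAddCommGroup E] [NormedSpace ℝ E]
    [SeminormedAddCommGroup F] [NormedSpace ℝ F] (T : E →L[ℝ] F) (g : Dual ℝ F) (x : E) :
    adjCLM T g x = g (T x) := rfl

/-- One-step Arens-type adjoint of a bounded bilinear map:
`ext1 β g' e = g' ∘ (β e)`. -/
def ext1 {E F G : Type*} [SeminormedAddCommGroup E] [NormedSpace ℝ E]
    [SeminormedAddCommGroup F] [NormedSpace ℝ F] [SeminormedAddCommGroup G] [NormedSpace ℝ G]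
    (β : E →L[ℝ] F →L[ℝ] G) : Dual ℝ G →L[ℝ] E →L[ℝ] Dual ℝ F :=
  ((ContinuousLinearMap.compL ℝ F G ℝ).flip.comp β).flip

@[simp] theorem ext1_apply {E F G : Type*} [SeminormedAddCommGroup E] [NormedSpace ℝ E]
    [SeminormedAddCommGroup F] [NormedSpace ℝ F] [SeminormedAddCommGroup G] [NormedSpace ℝ G]
    (β : E →L[ℝ] F →L[ℝ] G) (g' : Dual ℝ G) (e : E) (f : F) :
    ext1 β g' e f = g' (β e f) := rfl

/-- Triple adjoint: the (first) Arens extension of a bounded bilinear map to the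
second duals. -/
def ext3 {E F G : Type*} [SeminormedAddCommGroup E] [NormedSpace ℝ E]
    [SeminormedAddCommGroup F] [NormedSpace ℝ F] [SeminormedAddCommGroup G] [NormedSpace ℝ G]
    (β : E →L[ℝ] F →L[ℝ] G) :
    Dual ℝ (Dual ℝ E) →L[ℝ] Dual ℝ (Dual ℝ F) →L[ℝ] Dual ℝ (Dual ℝ G) :=
  ext1 (ext1 (ext1 β))

variable (A : Type*) [NonUnitalNormedRing A] [NormedSpace ℝ A]
  [SMulCommClass ℝ A A] [IsScalarTower ℝ A A] [CompleteSpace A]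

/-- The first (left) Arens product on `A**`: `⟨a''b'', a'⟩ = ⟨a'', b''a'⟩`. -/
def fArens : Dual ℝ (Dual ℝ A) →L[ℝ] Dual ℝ (Dual ℝ A) →L[ℝ] Dual ℝ (Dual ℝ A) :=
  ext3 (ContinuousLinearMap.mul ℝ A)

/-- The second (right) Arens product on `A**`: `⟨a''∘b'', a'⟩ = ⟨b'', a'∘a''⟩`. -/
def sArens : Dual ℝ (Dual ℝ A) →L[ℝ] Dual ℝ (Dual ℝ A) →L[ℝ] Dual ℝ (Dual ℝ A) :=
  (ext3 (ContinuousLinearMap.mul ℝ A).flip).flip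

/-- `A` is Arens regular when the two Arens products on `A**` coincide. -/
def ArensRegular : Prop := fArens A = sArens A

variable {A}

/-- Weak-star to weak continuity for a map from the dual of `E` into `F`. -/
def WStarToWCont {E F : Type*} [SeminormedAddCommGroup E] [NormedSpace ℝ E]
    [SeminormedAddCommGroup F] [NormedSpace ℝ F] (f : Dual ℝ E → F) : Prop :=
  Continuous fun x : WeakDual ℝ E => toWeakSpace ℝ F (f (WeakDual.toNormedDual x))

variable (A)

/-- The second adjoint `T'' : A** → A**` of `T : A → A`. -/
def secondAdj (T : A →L[ℝ] A) : Dual ℝ (Dual ℝ A) →L[ℝ] Dual ℝ (Dual ℝ A) :=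
  adjCLM (adjCLM T)

/-- Left action of `A` on `A*`: `⟨a·a', b⟩ = ⟨a', ba⟩`. -/
def dualLeft : A →L[ℝ] Dual ℝ A →L[ℝ] Dual ℝ A :=
  (ext1 (ContinuousLinearMap.mul ℝ A).flip).flip

/-- Right action of `A` on `A*`: `⟨a'·a, b⟩ = ⟨a', ab⟩`. -/
def dualRight : Dual ℝ A →L[ℝ] A →L[ℝ] Dual ℝ A :=
  ext1 (ContinuousLinearMap.mul ℝ A)

/-- Left action of `A**` (first Arens product) on `A***`. -/
def dualLeft2 : Dual ℝ (Dual ℝ A) →L[ℝ] Dual ℝ (Dual ℝ (Dual ℝ A)) →L[ℝ]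
    Dual ℝ (Dual ℝ (Dual ℝ A)) :=
  (ext1 (fArens A).flip).flip

/-- Right action of `A**` (first Arens product) on `A***`. -/
def dualRight2 : Dual ℝ (Dual ℝ (Dual ℝ A)) →L[ℝ] Dual ℝ (Dual ℝ A) →L[ℝ]
    Dual ℝ (Dual ℝ (Dual ℝ A)) :=
  ext1 (fArens A)

end ArensSetup

section BimoduleSetup

set_option maxHeartbeats 1000000

open Filter Topology ContinuousLinearMap NormedSpace

/-- A Banach `A`-bimodule: bounded bilinear left and right actions satisfying the
usual compatibility axioms. -/
structure BanachBimodule (A X : Type*) [NonUnitalNormedRing A] [NormedSpace ℝ A]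
    [SMulCommClass ℝ A A] [IsScalarTower ℝ A A]
    [NormedAddCommGroup X] [NormedSpace ℝ X] [CompleteSpace X] where
  l : A →L[ℝ] X →L[ℝ] X
  r : X →L[ℝ] A →L[ℝ] X
  l_mul : ∀ a b x, l (a * b) x = l a (l b x)
  r_mul : ∀ x a b, r (r x a) b = r x (a * b)
  l_r : ∀ a x b, l a (r x b) = r (l a x) b

variable {A X : Type*} [NonUnitalNormedRing A] [NormedSpace ℝ A]
  [SMulCommClass ℝ A A] [IsScalarTower ℝ A A] [CompleteSpace A]
  [NormedAddCommGroup X] [NormedSpace ℝ X] [CompleteSpace X]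

/-- Left action of `A` on `X*`: `⟨a·f, x⟩ = ⟨f, x·a⟩`. -/
noncomputable def modDualLeft (M : BanachBimodule A X) : A →L[ℝ] Dual ℝ X →L[ℝ] Dual ℝ X :=
  (ext1 M.r.flip).flip

/-- Right action of `A` on `X*`: `⟨f·a, x⟩ = ⟨f, a·x⟩`. -/
noncomputable def modDualRight (M : BanachBimodule A X) : Dual ℝ X →L[ℝ] A →L[ℝ] Dual ℝ X :=
  ext1 M.l

/-- Left action of `A**` on `X**` (first Arens extension). -/
noncomputable def modL2 (M : BanachBimodule A X) :
    Dual ℝ (Dual ℝ A) →L[ℝ] Dual ℝ (Dual ℝ X) →L[ℝ] Dual ℝ (Dual ℝ X) :=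
  ext3 M.l

/-- Right action of `A**` on `X**` (first Arens extension); `modR2 M x'' a'' = x''a''`. -/
noncomputable def modR2 (M : BanachBimodule A X) :
    Dual ℝ (Dual ℝ X) →L[ℝ] Dual ℝ (Dual ℝ A) →L[ℝ] Dual ℝ (Dual ℝ X) :=
  ext3 M.r

/-- Left action of `A**` on `X***`: `⟨a''·x''', x''⟩ = ⟨x''', x''a''⟩`. -/
noncomputable def modL3 (M : BanachBimodule A X) :
    Dual ℝ (Dual ℝ A) →L[ℝ] Dual ℝ (Dual ℝ (Dual ℝ X)) →L[ℝ] Dual ℝ (Dual ℝ (Dual ℝ X)) :=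
  (ext1 (modR2 M).flip).flip

/-- Right action of `A**` on `X***`: `⟨x'''·a'', x''⟩ = ⟨x''', a''x''⟩`. -/
noncomputable def modR3 (M : BanachBimodule A X) :
    Dual ℝ (Dual ℝ (Dual ℝ X)) →L[ℝ] Dual ℝ (Dual ℝ A) →L[ℝ] Dual ℝ (Dual ℝ (Dual ℝ X)) :=
  ext1 (modL2 M)

end BimoduleSetup

section DerivationSetup

variable {B Y : Type*} [SeminormedAddCommGroup B] [NormedSpace ℝ B]
  [SeminormedAddCommGroup Y] [NormedSpace ℝ Y]

/-- `D` is a derivation with respect to the multiplication `m` and the module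
actions `l`, `r`. -/
def IsDeriv (m : B →L[ℝ] B →L[ℝ] B) (l : B →L[ℝ] Y →L[ℝ] Y)
    (r : Y →L[ℝ] B →L[ℝ] Y) (D : B →L[ℝ] Y) : Prop :=
  ∀ a b, D (m a b) = l a (D b) + r (D a) b

/-- `D` is an inner derivation: `D a = a·y − y·a` for some fixed `y`. -/
def IsInner (l : B →L[ℝ] Y →L[ℝ] Y) (r : Y →L[ℝ] B →L[ℝ] Y) (D : B →L[ℝ] Y) : Prop :=
  ∃ y, ∀ a, D a = l a y - r y a

/-- `D` is a `T-S`-derivation: `D(ab) = T(a)·D(b) + D(a)·S(b)`. -/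
def IsTSDeriv (m : B →L[ℝ] B →L[ℝ] B) (l : B →L[ℝ] Y →L[ℝ] Y)
    (r : Y →L[ℝ] B →L[ℝ] Y) (T S : B →L[ℝ] B) (D : B →L[ℝ] Y) : Prop :=
  ∀ a b, D (m a b) = l (T a) (D b) + r (D a) (S b)

/-- `D` is an inner `T-S`-derivation: `D a = T(a)·y − y·S(a)` for some fixed `y`. -/
def IsTSInner (l : B →L[ℝ] Y →L[ℝ] Y) (r : Y →L[ℝ] B →L[ℝ] Y)
    (T S : B →L[ℝ] B) (D : B →L[ℝ] Y) : Prop :=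
  ∃ y, ∀ a, D a = l (T a) y - r y (S a)

end DerivationSetup

theorem exists_eq_apply_of_continuous_weakDual {𝕜 E : Type*} [NontriviallyNormedField 𝕜]
    [SeminormedAddCommGroup E] [NormedSpace 𝕜 E] (φ : Dual 𝕜 (Dual 𝕜 E))
    (hφ : Continuous fun F : WeakDual 𝕜 E => φ (WeakDual.toNormedDual F)) :
    ∃ e : E, ∀ F : Dual 𝕜 E, φ F = F e := by
  obtain ⟨e, he⟩ := LinearMap.dualEmbedding_surjective (topDualPairing 𝕜 E)
    ⟨(φ : Dual 𝕜 E →ₗ[𝕜] 𝕜), hφ⟩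
  exact ⟨e, fun F => (DFunLike.congr_fun he F).symm⟩

theorem exists_adjCLM_apply_eq_of_wStarToWCont {E F : Type*} [SeminormedAddCommGroup E]
    [NormedSpace ℝ E] [SeminormedAddCommGroup F] [NormedSpace ℝ F] {u : Dual ℝ E →L[ℝ] F}
    (hu : WStarToWCont u) (g : Dual ℝ F) : ∃ e : E, ∀ F' : Dual ℝ E, adjCLM u g F' = F' e :=
  exists_eq_apply_of_continuous_weakDual _
    ((WeakBilin.eval_continuous (topDualPairing ℝ F).flip (g : StrongDual ℝ F)).comp hu)

theorem IsTSDeriv.secondAdjoint_fArens_inclusionInDoubleDual {A X : Type*}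
    [NonUnitalNormedRing A] [NormedSpace ℝ A] [SMulCommClass ℝ A A] [IsScalarTower ℝ A A]
    [NormedAddCommGroup X] [NormedSpace ℝ X] [CompleteSpace X] {M : BanachBimodule A X}
    {T S : A →L[ℝ] A} {D : A →L[ℝ] Dual ℝ X}
    (hD : IsTSDeriv (ContinuousLinearMap.mul ℝ A) (modDualLeft M) (modDualRight M) T S D)
    (a : A) (G : Dual ℝ (Dual ℝ A)) :
    adjCLM (adjCLM D) (fArens A (inclusionInDoubleDual ℝ A a) G) =
      modL3 M (secondAdj A T (inclusionInDoubleDual ℝ A a)) (adjCLM (adjCLM D) G) +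
      modR3 M (adjCLM (adjCLM D) (inclusionInDoubleDual ℝ A a)) (secondAdj A S G) := by
  refine ContinuousLinearMap.ext fun x'' => ?_
  -- For `a'' = â`, every term unfolds to `G` applied to a functional `b ↦ x'' (⋯)` on `A`.
  change G _ = G _ + G _
  rw [← map_add]
  congr 1
  refine ContinuousLinearMap.ext fun b => ?_
  change x'' _ = x'' _ + x'' _
  rw [← map_add]
  congr 1
  exact hD a b


section Statements
set_option maxHeartbeats 1000000
open Filter Topology ContinuousLinearMap NormedSpace

variable {A : Type*} [NonUnitalNormedRing A] [NormedSpace ℝ A]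
  [SMulCommClass ℝ A A] [IsScalarTower ℝ A A] [CompleteSpace A]

variable {X : Type*} [NormedAddCommGroup X] [NormedSpace ℝ X] [CompleteSpace X]

/-- If `a'' ↦ x''T''(a'')` is weak-star to weak continuous for all `x'' ∈ X**` and
`D : A → X*` is a `T-S`-derivation, then `D'' : A** → X***` is a `T''-S''`-derivation. -/
theorem secondAdjoint_TSderivation_module (M : BanachBimodule A X) (T S : A →L[ℝ] A)
    (hw : ∀ x'' : Dual ℝ (Dual ℝ X), WStarToWCont (fun a'' => modR2 M x'' (secondAdj A T a'')))
    (D : A →L[ℝ] Dual ℝ X)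
    (hD : IsTSDeriv (ContinuousLinearMap.mul ℝ A) (modDualLeft M) (modDualRight M) T S D) :
    IsTSDeriv (fArens A) (modL3 M) (modR3 M)
      (secondAdj A T) (secondAdj A S) (adjCLM (adjCLM D)) := by
  intro F G
  refine ContinuousLinearMap.ext fun x'' => ?_
  obtain ⟨f, hf⟩ := exists_adjCLM_apply_eq_of_wStarToWCont
    (u := (modR2 M x'').comp (secondAdj A T)) (hw x'') (adjCLM (adjCLM D) G)
  have hsplit : ext1 (ext1 (ContinuousLinearMap.mul ℝ A)) G (adjCLM D x'') =
      f + adjCLM D (modL2 M (secondAdj A S G) x'') :=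
    ContinuousLinearMap.ext fun a => by
      have h := congrArg (· x'') (hD.secondAdjoint_fArens_inclusionInDoubleDual a G)
      exact h.trans (congrArg (· + _) (hf (inclusionInDoubleDual ℝ A a)))
  calc adjCLM (adjCLM D) (fArens A F G) x''
      = F (ext1 (ext1 (ContinuousLinearMap.mul ℝ A)) G (adjCLM D x'')) := rfl
    _ = F f + F (adjCLM D (modL2 M (secondAdj A S G) x'')) := by rw [hsplit, map_add]
    _ = _ := by rw [← hf]; rfl

end Statements
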